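/- arXiv:2208.04193 — 6 statements merged into one kernel-verified Lean document; each statement's English description precedes it below -/
import Mathlib

section
/- Let 0 < a ≤ 1 and α_n = 1/(n+1)^a. Define δ_n^2 = ∑_{k=1}^n (π_k^n)^2 with π_k^n = α_k ∏_{i=k+1}^n (1-α_i). Then for all n ≥ 1, (1/2) α_n ≤ δ_n^2 ≤ α_n. -/
/-!
Peeling off the last factor `1 - α (n+1)` gives the recursion
`δ_{n+1}² = (1 - α_{n+1})² δ_n² + α_{n+1}²`, so both bounds follow by induction. For the upper
bound the step reduces to `α_n (1 - α_{n+1}) ≤ α_{n+1}`, i.e. `1/α_{n+1} ≤ 1/α_n + 1`, which for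
`α_n = (n+1)^(-a)` is the subadditivity `(n+2)^a ≤ (n+1)^a + 1` of `x ↦ x^a` for `a ≤ 1`.
The lower bound only needs `α` nonnegative and antitone: `(1 - β)² β/2 + β² ≥ β/2`.
-/

open Finset

noncomputable def averagingWeight (α : ℕ → ℝ) (k n : ℕ) : ℝ :=
  α k * ∏ i ∈ Icc (k + 1) n, (1 - α i)

noncomputable def sumSqAveragingWeight (α : ℕ → ℝ) (n : ℕ) : ℝ :=
  ∑ k ∈ Icc 1 n, averagingWeight α k n ^ 2

section Recursion

variable (α : ℕ → ℝ)

theorem averagingWeight_self (n : ℕ) : averagingWeight α n n = α n := by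
  simp [averagingWeight]

theorem averagingWeight_succ {k n : ℕ} (hk : k ≤ n) :
    averagingWeight α k (n + 1) = averagingWeight α k n * (1 - α (n + 1)) := by
  rw [averagingWeight, averagingWeight, prod_Icc_succ_top (by omega), mul_assoc]

theorem sumSqAveragingWeight_zero : sumSqAveragingWeight α 0 = 0 := by
  simp [sumSqAveragingWeight]

theorem sumSqAveragingWeight_succ (n : ℕ) :
    sumSqAveragingWeight α (n + 1) =
      (1 - α (n + 1)) ^ 2 * sumSqAveragingWeight α n + α (n + 1) ^ 2 := by
  have hpeel : ∀ k ∈ Icc 1 n,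
      averagingWeight α k (n + 1) ^ 2 = (1 - α (n + 1)) ^ 2 * averagingWeight α k n ^ 2 := by
    intro k hk
    rw [averagingWeight_succ α (mem_Icc.1 hk).2]
    ring
  rw [sumSqAveragingWeight, sum_Icc_succ_top (by omega), sum_congr rfl hpeel, ← mul_sum,
    averagingWeight_self, sumSqAveragingWeight]

theorem sumSqAveragingWeight_one : sumSqAveragingWeight α 1 = α 1 ^ 2 := by
  simp [sumSqAveragingWeight_succ, sumSqAveragingWeight_zero]

end Recursion

section Bounds

variable {α : ℕ → ℝ}

theorem sumSqAveragingWeight_le (h0 : ∀ m, 0 ≤ α m) (h1 : ∀ m, α m ≤ 1)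
    (hstep : ∀ m, α m * (1 - α (m + 1)) ≤ α (m + 1)) (n : ℕ) :
    sumSqAveragingWeight α n ≤ α n := by
  induction n with
  | zero => simpa [sumSqAveragingWeight_zero] using h0 0
  | succ m ih =>
    have hβ : 0 ≤ 1 - α (m + 1) := sub_nonneg.2 (h1 _)
    calc sumSqAveragingWeight α (m + 1)
        = (1 - α (m + 1)) ^ 2 * sumSqAveragingWeight α m + α (m + 1) ^ 2 :=
          sumSqAveragingWeight_succ α m
      _ ≤ (1 - α (m + 1)) * (α m * (1 - α (m + 1))) + α (m + 1) ^ 2 := by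
          nlinarith [mul_le_mul_of_nonneg_left ih (sq_nonneg (1 - α (m + 1)))]
      _ ≤ (1 - α (m + 1)) * α (m + 1) + α (m + 1) ^ 2 := by
          gcongr
          exact hstep m
      _ = α (m + 1) := by ring

theorem half_le_sumSqAveragingWeight (h0 : ∀ m, 0 ≤ α m) (hanti : Antitone α)
    (hhalf : 1 / 2 ≤ α 1) {n : ℕ} (hn : 1 ≤ n) : α n / 2 ≤ sumSqAveragingWeight α n := by
  induction n, hn using Nat.le_induction with
  | base =>
    rw [sumSqAveragingWeight_one]
    nlinarith
  | succ m _ ih =>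
    have hmono : α (m + 1) / 2 ≤ sumSqAveragingWeight α m :=
      le_trans (by linarith [hanti (Nat.le_succ m)]) ih
    rw [sumSqAveragingWeight_succ]
    nlinarith [mul_le_mul_of_nonneg_left hmono (sq_nonneg (1 - α (m + 1))),
      pow_nonneg (h0 (m + 1)) 3]

end Bounds

theorem one_div_mul_one_sub_one_div_le {x y : ℝ} (hx : 0 < x) (hy : 0 < y) (hxy : y ≤ x + 1) :
    1 / x * (1 - 1 / y) ≤ 1 / y := by
  rw [one_sub_div hy.ne', div_mul_div_comm, one_mul, div_le_div_iff₀ (by positivity) hy,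
    one_mul]
  exact mul_le_mul_of_nonneg_right (by linarith) hy.le

noncomputable def rpowStepSize (a : ℝ) (m : ℕ) : ℝ :=
  1 / ((m : ℝ) + 1) ^ a

section RpowStepSize

variable {a : ℝ}

theorem rpowStepSize_nonneg (a : ℝ) (m : ℕ) : 0 ≤ rpowStepSize a m := by
  unfold rpowStepSize
  positivity

theorem rpowStepSize_le_one (ha : 0 ≤ a) (m : ℕ) : rpowStepSize a m ≤ 1 :=
  div_le_one_of_le₀ (Real.one_le_rpow (by linarith [m.cast_nonneg (α := ℝ)]) ha)
    (by positivity)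

theorem rpowStepSize_antitone (ha : 0 ≤ a) : Antitone (rpowStepSize a) := by
  intro m n hmn
  unfold rpowStepSize
  gcongr

theorem half_le_rpowStepSize_one (ha : a ≤ 1) : 1 / 2 ≤ rpowStepSize a 1 := by
  have h : (2 : ℝ) ^ a ≤ 2 := by
    simpa using Real.rpow_le_rpow_of_exponent_le (by norm_num : (1 : ℝ) ≤ 2) ha
  rw [rpowStepSize, one_div_le_one_div (by norm_num) (by positivity)]
  simpa [one_add_one_eq_two] using h

theorem rpowStepSize_mul_one_sub_le (ha0 : 0 ≤ a) (ha1 : a ≤ 1) (m : ℕ) :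
    rpowStepSize a m * (1 - rpowStepSize a (m + 1)) ≤ rpowStepSize a (m + 1) := by
  have hm : (0 : ℝ) ≤ m + 1 := by positivity
  apply one_div_mul_one_sub_one_div_le (by positivity) (by positivity)
  simpa [Nat.cast_succ] using Real.rpow_add_le_add_rpow hm zero_le_one ha0 ha1

end RpowStepSize

theorem delta_sq_bounds (a : ℝ) (ha0 : 0 < a) (ha1 : a ≤ 1)
    (α : ℕ → ℝ) (hα : ∀ m, α m = 1 / ((m : ℝ) + 1) ^ a)
    (π : ℕ → ℕ → ℝ)
    (hπ : ∀ k n, π k n = α k * ∏ i ∈ Finset.Icc (k + 1) n, (1 - α i))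
    (δsq : ℕ → ℝ)
    (hδ : ∀ n, δsq n = ∑ k ∈ Finset.Icc 1 n, (π k n) ^ 2)
    (n : ℕ) (hn : 1 ≤ n) :
    (1 / 2) * α n ≤ δsq n ∧ δsq n ≤ α n := by
  obtain rfl : π = averagingWeight α := funext₂ hπ
  obtain rfl : δsq = sumSqAveragingWeight α := funext hδ
  obtain rfl : α = rpowStepSize a := funext hα
  constructor
  · rw [one_div_mul_eq_div]
    exact half_le_sumSqAveragingWeight (rpowStepSize_nonneg a) (rpowStepSize_antitone ha0.le)
      (half_le_rpowStepSize_one ha1) hn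
  · exact sumSqAveragingWeight_le (rpowStepSize_nonneg a) (rpowStepSize_le_one ha0.le)
      (rpowStepSize_mul_one_sub_le ha0.le ha1) n
end

section
/- Let 0 < a ≤ 1 and α_n = 1/(n+1)^a. Define δ_n^2 = ∑_{k=1}^n (π_k^n)^2 with π_k^n = α_k ∏_{i=k+1}^n (1-α_i). Then for all n ≥ 1, δ_n^2 ≤ α_{n+1} = 1/(n+2)^a. -/
/-!
The sum obeys δ_{n+1}² = (1 - α_{n+1})² δ_n² + α_{n+1}², but the bound δ_n² ≤ α_{n+1} alone is
not preserved by this recursion. The stronger bound δ_n² ≤ α_{n+1} (1 - (a / (n + 1))²), an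
equality when a = 1, is. The inductive step reduces to
a / (n + 2) ≤ x (1 - x) + (a / (n + 1))² (1 - x)² for x = α_{n+1}. The right side is concave in x,
and Bernoulli's inequality (1 + t)^a ≤ 1 + a t confines x to an interval at whose endpoints the
inequality becomes polynomial in a and n; Bernoulli also gives α_{n+1} ≤ (1 + a / (n + 2)) α_{n+2}.
-/

open Finset

def deltaSq {R : Type*} [CommRing R] (α : ℕ → R) (n : ℕ) : R :=
  ∑ k ∈ Icc 1 n, (α k * ∏ i ∈ Icc (k + 1) n, (1 - α i)) ^ 2

theorem deltaSq_succ {R : Type*} [CommRing R] (α : ℕ → R) (m : ℕ) :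
    deltaSq α (m + 1) = (1 - α (m + 1)) ^ 2 * deltaSq α m + α (m + 1) ^ 2 := by
  rw [deltaSq, deltaSq, sum_Icc_succ_top (by omega), Icc_eq_empty (a := m + 1 + 1) (by omega),
    prod_empty, mul_one, mul_sum]
  congr 1
  refine sum_congr rfl fun k hk => ?_
  rw [prod_Icc_succ_top (by linarith [(mem_Icc.1 hk).2])]
  ring

theorem deltaSq_one {R : Type*} [CommRing R] (α : ℕ → R) : deltaSq α 1 = α 1 ^ 2 := by
  simp [deltaSq]

theorem min_le_quadratic_of_mem_Icc {A B C xl xu x : ℝ} (hA : A ≤ 0) (hx : x ∈ Set.Icc xl xu) :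
    min (A * xl ^ 2 + B * xl + C) (A * xu ^ 2 + B * xu + C) ≤ A * x ^ 2 + B * x + C := by
  obtain ⟨hxl, hxu⟩ := hx
  rcases le_or_gt 0 (A * (x + xl) + B) with h | h
  · nlinarith [min_le_left (A * xl ^ 2 + B * xl + C) (A * xu ^ 2 + B * xu + C),
      mul_nonneg (sub_nonneg.2 hxl) h]
  · have h' : A * (x + xu) + B < 0 := by
      nlinarith [mul_nonneg (neg_nonneg.2 hA) (sub_nonneg.2 hxu)]
    nlinarith [min_le_right (A * xl ^ 2 + B * xl + C) (A * xu ^ 2 + B * xu + C),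
      mul_nonneg (sub_nonneg.2 hxu) (neg_nonneg.2 h'.le)]

theorem div_le_mul_one_sub_add_sq_mul_sq {a s x : ℝ} (ha0 : 0 ≤ a) (ha1 : a ≤ 1) (hs : 2 ≤ s)
    (hx : x ∈ Set.Icc (1 / (1 + a * s)) (1 - a * s / (s + 1))) :
    a / (s + 1) ≤ x * (1 - x) + (a / s) ^ 2 * (1 - x) ^ 2 := by
  have hs0 : 0 < s := by linarith
  have hquad : ∀ z : ℝ, z * (1 - z) + (a / s) ^ 2 * (1 - z) ^ 2
      = ((a / s) ^ 2 - 1) * z ^ 2 + (1 - 2 * (a / s) ^ 2) * z + (a / s) ^ 2 := fun z => by ring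
  have hA : (a / s) ^ 2 - 1 ≤ 0 := by
    have : a / s ≤ 1 := (div_le_one hs0).2 (by linarith)
    nlinarith [div_nonneg ha0 hs0.le]
  have hlower : a / (s + 1) ≤ 1 / (1 + a * s) * (1 - 1 / (1 + a * s))
      + (a / s) ^ 2 * (1 - 1 / (1 + a * s)) ^ 2 := by
    rw [← sub_nonneg]
    have e : 1 / (1 + a * s) * (1 - 1 / (1 + a * s)) + (a / s) ^ 2 * (1 - 1 / (1 + a * s)) ^ 2
        - a / (s + 1) = a * (1 - a) * (s ^ 2 * (1 + a) + s * (1 - a - a ^ 2) - (1 + a + a ^ 2))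
          / ((1 + a * s) ^ 2 * (s + 1)) := by
      field_simp; ring
    rw [e]
    apply div_nonneg _ (by positivity)
    apply mul_nonneg (mul_nonneg ha0 (by linarith))
    nlinarith [mul_nonneg (mul_nonneg (sub_nonneg.2 hs) hs0.le) (by linarith : (0 : ℝ) ≤ 1 + a),
      mul_nonneg (sub_nonneg.2 hs) (by nlinarith : (0 : ℝ) ≤ 3 + a - a ^ 2)]
  have hupper : a / (s + 1) ≤ (1 - a * s / (s + 1)) * (1 - (1 - a * s / (s + 1)))
      + (a / s) ^ 2 * (1 - (1 - a * s / (s + 1))) ^ 2 := by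
    rw [← sub_nonneg]
    have e : (1 - a * s / (s + 1)) * (1 - (1 - a * s / (s + 1)))
        + (a / s) ^ 2 * (1 - (1 - a * s / (s + 1))) ^ 2 - a / (s + 1)
        = a * (1 - a) * (s ^ 2 - 1 - a - a ^ 2) / (s + 1) ^ 2 := by
      field_simp; ring
    rw [e]
    apply div_nonneg _ (by positivity)
    apply mul_nonneg (mul_nonneg ha0 (by linarith))
    nlinarith
  rw [hquad] at hlower hupper ⊢
  exact (le_min hlower hupper).trans (min_le_quadratic_of_mem_Icc hA hx)

theorem one_sub_sq_mul_add_sq_le {a s d : ℝ} (ha0 : 0 ≤ a) (ha1 : a ≤ 1) (hs : 2 ≤ s)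
    (hd : d ≤ 1 / (s + 1) ^ a * (1 - (a / s) ^ 2)) :
    (1 - 1 / (s + 1) ^ a) ^ 2 * d + (1 / (s + 1) ^ a) ^ 2
      ≤ 1 / (s + 2) ^ a * (1 - (a / (s + 1)) ^ 2) := by
  set x := 1 / (s + 1) ^ a with hx
  set y := 1 / (s + 2) ^ a with hy
  have hs1 : 0 < s + 1 := by linarith
  have hx0 : 0 < x := by positivity
  have hx_mem : x ∈ Set.Icc (1 / (1 + a * s)) (1 - a * s / (s + 1)) := by
    constructor
    · have h := rpow_one_add_le_one_add_mul_self (s := s) (by linarith) ha0 ha1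
      rw [add_comm 1 s] at h
      exact one_div_le_one_div_of_le (by positivity) h
    · have h := rpow_one_add_le_one_add_mul_self (s := -(s / (s + 1)))
        (by rw [neg_le_neg_iff, div_le_one hs1]; linarith) ha0 ha1
      have e : 1 / (s + 1) = 1 + -(s / (s + 1)) := by field_simp; ring
      calc x = (1 + -(s / (s + 1))) ^ a := by
            rw [← e, Real.div_rpow zero_le_one hs1.le, Real.one_rpow]
        _ ≤ 1 + a * -(s / (s + 1)) := h
        _ = 1 - a * s / (s + 1) := by ring
  have hkey := div_le_mul_one_sub_add_sq_mul_sq ha0 ha1 hs hx_mem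
  have hxy : x ≤ y * (1 + a / (s + 1)) := by
    have h := rpow_one_add_le_one_add_mul_self (s := 1 / (s + 1))
      (by linarith [one_div_pos.2 hs1]) ha0 ha1
    have e : x = y * (1 + 1 / (s + 1)) ^ a := by
      rw [hx, hy, show 1 + 1 / (s + 1) = (s + 2) / (s + 1) by field_simp; ring,
        Real.div_rpow (by linarith) hs1.le]
      field_simp
    rw [e]
    calc y * (1 + 1 / (s + 1)) ^ a ≤ y * (1 + a * (1 / (s + 1))) := by gcongr
      _ = y * (1 + a / (s + 1)) := by ring
  have ha_div : a / (s + 1) ≤ 1 := (div_le_one hs1).2 (by linarith)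
  calc (1 - x) ^ 2 * d + x ^ 2 ≤ (1 - x) ^ 2 * (x * (1 - (a / s) ^ 2)) + x ^ 2 := by gcongr
    _ ≤ x * (1 - a / (s + 1)) := by nlinarith [mul_le_mul_of_nonneg_left hkey hx0.le]
    _ ≤ y * (1 + a / (s + 1)) * (1 - a / (s + 1)) := by gcongr
    _ = y * (1 - (a / (s + 1)) ^ 2) := by ring

theorem one_div_two_rpow_sq_le {a : ℝ} (ha0 : 0 ≤ a) (ha1 : a ≤ 1) :
    (1 / (2 : ℝ) ^ a) ^ 2 ≤ 1 / (3 : ℝ) ^ a * (1 - (a / 2) ^ 2) := by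
  have h := rpow_one_add_le_one_add_mul_self (s := -1 / 4) (by norm_num) ha0 ha1
  rw [show (1 : ℝ) + -1 / 4 = 3 / 4 by norm_num, Real.div_rpow (by norm_num) (by norm_num)] at h
  have h4 : ((2 : ℝ) ^ a) ^ 2 = (4 : ℝ) ^ a := by
    rw [← Real.rpow_natCast, ← Real.rpow_mul (by norm_num), mul_comm, Real.rpow_mul (by norm_num)]
    norm_num
  rw [div_pow, one_pow, h4]
  calc 1 / (4 : ℝ) ^ a = 3 ^ a / 4 ^ a * (1 / 3 ^ a) := by field_simp
    _ ≤ (1 + a * (-1 / 4)) * (1 / 3 ^ a) := by gcongr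
    _ ≤ (1 - (a / 2) ^ 2) * (1 / 3 ^ a) := by gcongr; nlinarith
    _ = 1 / 3 ^ a * (1 - (a / 2) ^ 2) := mul_comm _ _

theorem deltaSq_le_mul_one_sub_sq {a : ℝ} (ha0 : 0 ≤ a) (ha1 : a ≤ 1) {α : ℕ → ℝ}
    (hα : ∀ m, α m = 1 / ((m : ℝ) + 1) ^ a) {n : ℕ} (hn : 1 ≤ n) :
    deltaSq α n ≤ α (n + 1) * (1 - (a / (n + 1)) ^ 2) := by
  induction n, hn using Nat.le_induction with
  | base =>
    rw [deltaSq_one, hα, hα]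
    convert one_div_two_rpow_sq_le ha0 ha1 using 3 <;> norm_num
  | succ n hn ih =>
    rw [hα] at ih
    rw [deltaSq_succ, hα, hα]
    push_cast at ih ⊢
    have hs : (2 : ℝ) ≤ n + 1 := by
      have : (1 : ℝ) ≤ n := by exact_mod_cast hn
      linarith
    convert one_sub_sq_mul_add_sq_le ha0 ha1 hs ih using 4
    ring

theorem delta_sq_le_alpha_succ (a : ℝ) (ha0 : 0 < a) (ha1 : a ≤ 1)
    (α : ℕ → ℝ) (hα : ∀ m, α m = 1 / ((m : ℝ) + 1) ^ a)
    (π : ℕ → ℕ → ℝ)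
    (hπ : ∀ k n, π k n = α k * ∏ i ∈ Finset.Icc (k + 1) n, (1 - α i))
    (δsq : ℕ → ℝ)
    (hδ : ∀ n, δsq n = ∑ k ∈ Finset.Icc 1 n, (π k n) ^ 2)
    (n : ℕ) (hn : 1 ≤ n) :
    δsq n ≤ α (n + 1) := by
  have hδα : δsq n = deltaSq α n := by simp only [hδ, hπ, deltaSq]
  have hα_pos : 0 < α (n + 1) := by rw [hα]; positivity
  calc δsq n ≤ α (n + 1) * (1 - (a / (n + 1)) ^ 2) :=
        hδα ▸ deltaSq_le_mul_one_sub_sq ha0.le ha1 hα hn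
    _ ≤ α (n + 1) := mul_le_of_le_one_right hα_pos.le (sub_le_self _ (sq_nonneg _))
end

section
/- Let 1/2 ≤ a ≤ 1 and α_n = 1/(n+1)^a. Define τ_n(a) = ∑_{k=1}^n α_k(1-α_k). Then for 1/2 ≤ a < 1 and all n ≥ 1, τ_n(a) ≥ τ_1(a) · n^{1-a}, and for a = 1 and all n ≥ 1, τ_n(1) ≥ (1/(4 ln 2)) · ln(n+1). -/
/-!
Both bounds are proved by telescoping: a lower bound `g n` for `τ n` follows from `g 1 ≤ τ 1` and
`g (n + 1) - g n ≤ α_{n+1} (1 - α_{n+1})`. For `g n = τ₁ n^{1-a}` the increment is at most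
`τ₁ (1 - a) n^{-a}` by concavity of `x ↦ x^{1-a}`, and `(1 - a) ≤ 2/3 ≤ (2n / (n + 2))^a` turns this into
`α_{n+1}(1 - α_{n+1})`, using `α_{n+1} ≤ α_1`. For `g n = log (n + 1) / (4 log 2)` the increment is at most
`1 / (4 log 2 (n + 1))`, which is below `(n + 1) / (n + 2)²` because `(3/2)² ≤ 4 log 2`.
-/

open Finset

theorem le_sum_Icc_of_sub_le {M : Type*} [AddCommGroup M] [PartialOrder M] [IsOrderedAddMonoid M]
    {g t : ℕ → M} (h₁ : g 1 ≤ t 1) (hstep : ∀ n, 1 ≤ n → g (n + 1) - g n ≤ t (n + 1)) :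
    ∀ n, 1 ≤ n → g n ≤ ∑ k ∈ Icc 1 n, t k := by
  intro n hn
  induction n, hn using Nat.le_induction with
  | base => simpa using h₁
  | succ n hn ih =>
    rw [sum_Icc_succ_top (by omega)]
    calc g (n + 1) = g n + (g (n + 1) - g n) := by abel
      _ ≤ _ := add_le_add ih (hstep n hn)

theorem Real.add_one_rpow_sub_rpow_le {x p : ℝ} (hx : 0 < x) (hp₀ : 0 ≤ p) (hp₁ : p ≤ 1) :
    (x + 1) ^ p - x ^ p ≤ p * x ^ (p - 1) := by
  have hbern : (1 + 1 / x) ^ p ≤ 1 + p * (1 / x) :=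
    rpow_one_add_le_one_add_mul_self (by linarith [one_div_pos.mpr hx]) hp₀ hp₁
  have hfactor : (x + 1) ^ p = x ^ p * (1 + 1 / x) ^ p := by
    rw [← Real.mul_rpow hx.le (by positivity)]
    field_simp
  calc (x + 1) ^ p - x ^ p = x ^ p * ((1 + 1 / x) ^ p - 1) := by rw [hfactor]; ring
    _ ≤ x ^ p * (p * (1 / x)) := by gcongr; linarith
    _ = p * x ^ (p - 1) := by rw [Real.rpow_sub_one hx.ne']; ring

theorem tau_step_rpow {a N : ℝ} (ha : 1 / 2 ≤ a) (ha1 : a < 1) (hN : 1 ≤ N) :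
    1 / (2 : ℝ) ^ a * (1 - 1 / (2 : ℝ) ^ a) * ((N + 1) ^ (1 - a) - N ^ (1 - a)) ≤
      1 / (N + 2) ^ a * (1 - 1 / (N + 2) ^ a) := by
  have hN₀ : 0 < N := by linarith
  have hconc : (N + 1) ^ (1 - a) - N ^ (1 - a) ≤ (1 - a) / N ^ a := by
    have := Real.add_one_rpow_sub_rpow_le hN₀ (by linarith) (by linarith : 1 - a ≤ 1)
    rwa [sub_sub_cancel_left, Real.rpow_neg hN₀.le, ← div_eq_mul_inv] at this
  have hratio : (1 - a) * (N + 2) ^ a ≤ (2 : ℝ) ^ a * N ^ a := by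
    have h23 : (2 / 3 : ℝ) ≤ (2 / 3 : ℝ) ^ a := by
      simpa using Real.rpow_le_rpow_of_exponent_ge (by norm_num : (0:ℝ) < 2 / 3) (by norm_num) ha1.le
    have hmono : (2 / 3 * (N + 2)) ^ a ≤ (2 * N) ^ a :=
      Real.rpow_le_rpow (by positivity) (by linarith) (by linarith)
    rw [Real.mul_rpow (by norm_num) (by linarith), Real.mul_rpow (by norm_num) hN₀.le] at hmono
    calc (1 - a) * (N + 2) ^ a ≤ (2 / 3 : ℝ) ^ a * (N + 2) ^ a := by gcongr; linarith
      _ ≤ _ := hmono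
  have hα : 1 / (N + 2) ^ a ≤ 1 / (2 : ℝ) ^ a := by gcongr; linarith
  have hα₁ : 1 / (2 : ℝ) ^ a ≤ 1 := by
    rw [div_le_one (by positivity)]; exact Real.one_le_rpow (by norm_num) (by linarith)
  calc 1 / (2 : ℝ) ^ a * (1 - 1 / (2 : ℝ) ^ a) * ((N + 1) ^ (1 - a) - N ^ (1 - a))
      ≤ 1 / (2 : ℝ) ^ a * (1 - 1 / (2 : ℝ) ^ a) * ((1 - a) / N ^ a) := by gcongr
    _ = (1 - 1 / (2 : ℝ) ^ a) * ((1 - a) / ((2 : ℝ) ^ a * N ^ a)) := by field_simp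
    _ ≤ (1 - 1 / (N + 2) ^ a) * (1 / (N + 2) ^ a) := by
        refine mul_le_mul (by linarith) ?_ (by positivity) (by linarith)
        rw [div_le_div_iff₀ (by positivity) (by positivity)]
        linarith
    _ = _ := by ring

theorem tau_step_log {N : ℝ} (hN : 1 ≤ N) :
    1 / (4 * Real.log 2) * (Real.log (N + 2) - Real.log (N + 1)) ≤
      1 / (N + 2) * (1 - 1 / (N + 2)) := by
  have hlog2 := Real.log_two_gt_d9
  have hlog : Real.log (N + 2) - Real.log (N + 1) ≤ 1 / (N + 1) := by
    rw [← Real.log_div (by linarith) (by linarith)]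
    calc Real.log ((N + 2) / (N + 1)) ≤ (N + 2) / (N + 1) - 1 :=
          Real.log_le_sub_one_of_pos (by positivity)
      _ = 1 / (N + 1) := by field_simp; ring
  -- `(N + 2)² ≤ (9/4) (N + 1)² ≤ 4 log 2 (N + 1)²` since `N ≥ 1`
  have hquad : (N + 2) ^ 2 ≤ 4 * Real.log 2 * (N + 1) ^ 2 := by
    nlinarith [mul_nonneg (by linarith : (0:ℝ) ≤ N - 1) (by linarith : (0:ℝ) ≤ N + 1)]
  calc 1 / (4 * Real.log 2) * (Real.log (N + 2) - Real.log (N + 1))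
      ≤ 1 / (4 * Real.log 2) * (1 / (N + 1)) := by gcongr
    _ ≤ (N + 1) / (N + 2) ^ 2 := by
        rw [div_mul_div_comm, one_mul, div_le_div_iff₀ (by positivity) (by positivity)]
        linarith
    _ = 1 / (N + 2) * (1 - 1 / (N + 2)) := by field_simp; ring

theorem tau_lower_bounds_general (a : ℝ) (ha : 1 / 2 ≤ a)
    (τ : ℕ → ℝ → ℝ)
    (hτ : ∀ n b, τ n b = ∑ k ∈ Finset.Icc 1 n,
      (1 / ((k : ℝ) + 1) ^ b) * (1 - 1 / ((k : ℝ) + 1) ^ b)) :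
    (a < 1 → ∀ n : ℕ, 1 ≤ n → τ 1 a * (n : ℝ) ^ (1 - a) ≤ τ n a) ∧
    (a = 1 → ∀ n : ℕ, 1 ≤ n → (1 / (4 * Real.log 2)) * Real.log ((n : ℝ) + 1) ≤ τ n 1) := by
  have hτ₁ : ∀ b, τ 1 b = 1 / (2 : ℝ) ^ b * (1 - 1 / (2 : ℝ) ^ b) := fun b => by norm_num [hτ]
  simp only [hτ₁, hτ]
  refine ⟨fun ha1 => le_sum_Icc_of_sub_le (by norm_num) fun n hn => ?_,
    fun _ => le_sum_Icc_of_sub_le ?_ fun n hn => ?_⟩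
  · push_cast
    rw [← mul_sub, add_assoc, one_add_one_eq_two]
    exact tau_step_rpow ha ha1 (by exact_mod_cast hn)
  · have := Real.log_pos one_lt_two
    norm_num
    field_simp
    rfl
  · push_cast
    rw [← mul_sub, Real.rpow_one, add_assoc, one_add_one_eq_two]
    exact tau_step_log (by exact_mod_cast hn)

theorem tau_lower_bounds (a : ℝ) (ha : 1 / 2 ≤ a) (ha1 : a ≤ 1)
    (τ : ℕ → ℝ → ℝ)
    (hτ : ∀ n b, τ n b = ∑ k ∈ Finset.Icc 1 n,
      (1 / ((k : ℝ) + 1) ^ b) * (1 - 1 / ((k : ℝ) + 1) ^ b)) :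
    (a < 1 → ∀ n : ℕ, 1 ≤ n → τ 1 a * (n : ℝ) ^ (1 - a) ≤ τ n a) ∧
    (a = 1 → ∀ n : ℕ, 1 ≤ n → (1 / (4 * Real.log 2)) * Real.log ((n : ℝ) + 1) ≤ τ n 1) :=
  tau_lower_bounds_general a ha τ hτ
end

section
/- For all a ∈ [1/2, 1) and z ∈ [0,1), the inequality a(1 + 1/(1 - z^a)) ≤ 1 + 1/(1 - z) holds. -/
/-! Bernoulli's inequality for the exponent `a ∈ (0, 1]` gives `a (1 - z) ≤ 1 - z ^ a`, so
`a / (1 - z ^ a) ≤ 1 / (1 - z)`; adding `a < 1` gives the claim. -/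

theorem mul_one_sub_le_one_sub_rpow {a z : ℝ} (hz : 0 ≤ z) (ha0 : 0 ≤ a) (ha1 : a ≤ 1) :
    a * (1 - z) ≤ 1 - z ^ a := by
  have h := rpow_one_add_le_one_add_mul_self (s := z - 1) (by linarith) ha0 ha1
  rw [add_sub_cancel] at h
  linarith

theorem div_one_sub_rpow_le_one_div_one_sub {a z : ℝ} (hz0 : 0 ≤ z) (hz1 : z < 1)
    (ha0 : 0 < a) (ha1 : a ≤ 1) :
    a / (1 - z ^ a) ≤ 1 / (1 - z) := by
  have hpos : 0 < a * (1 - z) := mul_pos ha0 (by linarith)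
  calc a / (1 - z ^ a) ≤ a / (a * (1 - z)) :=
        div_le_div_of_nonneg_left ha0.le hpos (mul_one_sub_le_one_sub_rpow hz0 ha0.le ha1)
    _ = 1 / (1 - z) := by rw [div_mul_cancel_left₀ ha0.ne', one_div]

theorem a_mul_le (a z : ℝ) (ha : 1 / 2 ≤ a) (ha1 : a < 1)
    (hz0 : 0 ≤ z) (hz1 : z < 1) :
    a * (1 + 1 / (1 - z ^ a)) ≤ 1 + 1 / (1 - z) := by
  have h := div_one_sub_rpow_le_one_div_one_sub hz0 hz1 (by linarith) ha1.le
  calc a * (1 + 1 / (1 - z ^ a)) = a + a / (1 - z ^ a) := by ring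
    _ ≤ 1 + 1 / (1 - z) := by linarith
end

section
/- For all a ∈ [1/2, 1), the function x ↦ (x+1)^a · (x^{1-a} - (x-1)^{1-a}) is decreasing on [1,∞). -/
/-!
Writing `b = 1 - a`, the derivative of `f(x) = (x+1)^a (x^b - (x-1)^b)` is
`(x+1)^(a-1) * (a (x^b - (x-1)^b) - b (x+1) ((x-1)^(-a) - x^(-a)))`.
Both differences are integrals over `[x-1, x]`: `x^b - (x-1)^b = b ∫ t^(-a)` and
`(x-1)^(-a) - x^(-a) = a ∫ t^(-a-1)`, so the bracket is `a b ∫ t^(-a-1) (t - (x+1)) dt ≤ 0`.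
-/

open Real Set intervalIntegral

lemma rpow_sub_rpow_eq_mul_integral {x y r : ℝ} (hy : 0 < y) (hx : 0 < x) (hr : r ≠ 0) :
    x ^ r - y ^ r = r * ∫ t in y..x, t ^ (r - 1) := by
  rw [integral_rpow (Or.inr ⟨by simpa [sub_eq_iff_eq_add] using hr, notMem_uIcc_of_lt hy hx⟩),
    sub_add_cancel]
  field_simp

lemma integral_rpow_le_mul_integral_rpow_sub_one {x y c s : ℝ} (hy : 0 < y) (hyx : y ≤ x)
    (hxc : x ≤ c) : ∫ t in y..x, t ^ s ≤ c * ∫ t in y..x, t ^ (s - 1) := by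
  have h0 : (0 : ℝ) ∉ uIcc y x := notMem_uIcc_of_lt hy (hy.trans_le hyx)
  rw [← integral_const_mul]
  refine integral_mono_on hyx (intervalIntegrable_rpow (Or.inr h0))
    ((intervalIntegrable_rpow (Or.inr h0)).const_mul c) fun t ht => ?_
  have ht0 : 0 < t := hy.trans_le ht.1
  calc t ^ s = t * t ^ (s - 1) := by rw [rpow_sub_one ht0.ne']; field_simp
    _ ≤ c * t ^ (s - 1) := by gcongr; exact ht.2.trans hxc

lemma mul_rpow_one_sub_sub_rpow_le {a x y c : ℝ} (ha0 : 0 < a) (ha1 : a < 1) (hy : 0 < y)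
    (hyx : y ≤ x) (hxc : x ≤ c) :
    a * (x ^ (1 - a) - y ^ (1 - a)) ≤ (1 - a) * c * (y ^ (-a) - x ^ (-a)) := by
  have hx : 0 < x := hy.trans_le hyx
  have hI := integral_rpow_le_mul_integral_rpow_sub_one (s := -a) hy hyx hxc
  rw [rpow_sub_rpow_eq_mul_integral hy hx (sub_ne_zero.2 ha1.ne'), ← neg_sub (x ^ (-a)),
    rpow_sub_rpow_eq_mul_integral hy hx (neg_ne_zero.2 ha0.ne'), sub_sub_cancel_left]
  have hab : 0 < a * (1 - a) := mul_pos ha0 (sub_pos.2 ha1)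
  nlinarith [mul_le_mul_of_nonneg_left hI hab.le]

noncomputable def powDiff (a x : ℝ) : ℝ := (x + 1) ^ a * (x ^ (1 - a) - (x - 1) ^ (1 - a))

lemma continuousOn_powDiff {a : ℝ} (ha : a ≤ 1) : ContinuousOn (powDiff a) (Ici 1) := by
  refine .mul ?_ (.sub ?_ ?_) <;> refine .rpow_const (by fun_prop) fun x (hx : 1 ≤ x) => ?_
  exacts [Or.inl (by linarith), Or.inl (by linarith), Or.inr (by linarith)]

lemma hasDerivAt_powDiff (a : ℝ) {x : ℝ} (hx : 1 < x) :
    HasDerivAt (powDiff a) ((x + 1) ^ (a - 1) *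
      (a * (x ^ (1 - a) - (x - 1) ^ (1 - a)) - (1 - a) * (x + 1) * ((x - 1) ^ (-a) - x ^ (-a)))) x := by
  have hx1 : x + 1 ≠ 0 := by linarith
  have hg := ((hasDerivAt_id' x).add_const 1).rpow_const (p := a) (Or.inl hx1)
  have h1 := hasDerivAt_rpow_const (p := 1 - a) (Or.inl (by linarith : x ≠ 0))
  have h2 := ((hasDerivAt_id' x).sub_const 1).rpow_const (p := 1 - a) (Or.inl (by linarith))
  refine (hg.mul (h1.sub h2)).congr_deriv ?_
  simp only [Pi.sub_apply]
  rw [rpow_sub_one hx1, show 1 - a - 1 = -a by ring]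
  field_simp
  ring

theorem antitone_pow_diff (a : ℝ) (ha : 1 / 2 ≤ a) (ha1 : a < 1) :
    AntitoneOn (fun x : ℝ => (x + 1) ^ a * (x ^ (1 - a) - (x - 1) ^ (1 - a)))
      (Set.Ici (1 : ℝ)) := by
  have ha0 : 0 < a := by linarith
  show AntitoneOn (powDiff a) (Ici 1)
  refine antitoneOn_of_deriv_nonpos (convex_Ici 1) (continuousOn_powDiff ha1.le) ?_ ?_ <;>
    simp only [interior_Ici, mem_Ioi]
  · exact fun x hx => (hasDerivAt_powDiff a hx).differentiableAt.differentiableWithinAt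
  intro x hx
  rw [(hasDerivAt_powDiff a hx).deriv]
  exact mul_nonpos_of_nonneg_of_nonpos (rpow_nonneg (by linarith) _) <| sub_nonpos.2 <|
    mul_rpow_one_sub_sub_rpow_le ha0 ha1 (sub_pos.2 hx) (by linarith) (by linarith)
end

section
/- Let 1/2 ≤ a ≤ 1, α_k = 1/(k+1)^a, and γ_a = sup_{k≥2} [α_k(1-α_k)] / [α_{k+1}(1-α_{k+1})]. Then γ_a is finite, γ_a ≥ 1, and for a = 1 the ratio α_k(1-α_k)/(α_{k+1}(1-α_{k+1})) is decreasing in k ≥ 2 with supremum γ_1 = 32/27, and γ_a ≤ 32/27 for all a ∈ [1/2, 1]. -/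
/-!
Write `x = (k+1)^(-a)`, `y = (k+2)^(-a)`, `t = x / y` and `v = 1 / y`. Then the ratio
`x(1-x) / (y(1-y))` equals `t(v - t) / (v - 1)`, which increases in `v` (as `t ≥ 1`) and in
`t` (as long as `2t ≤ v`). For `a ≤ 1` we have `v ≤ k+2` and `t ≤ (k+2)/(k+1)`, the values at
`a = 1`, so every ratio is dominated by the one for `a = 1`, namely `k(k+2)²/(k+1)³`.
This rational function decreases for `k ≥ 2` and equals `32/27` at `k = 2`, since
`32(k+1)³ - 27k(k+2)² = (k-2)²(5k+8)`. For the lower bound, `a ≥ 1/2` gives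
`α₃ = 4^(-a) ≤ 1/2`, and `u ↦ u(1-u)` increases on `[0, 1/2]`.
-/

open Real

noncomputable def harmonicRatio (K : ℝ) : ℝ := K * (K + 2) ^ 2 / (K + 1) ^ 3

lemma harmonicRatio_le_of_neg_one_lt {K : ℝ} (hK : -1 < K) : harmonicRatio K ≤ 32 / 27 := by
  rw [harmonicRatio, div_le_div_iff₀ (pow_pos (by linarith) 3) (by norm_num)]
  nlinarith [mul_nonneg (sq_nonneg (K - 2)) (by linarith : (0 : ℝ) ≤ 5 * K + 8)]

lemma harmonicRatio_add_one_le {K : ℝ} (hK : 2 ≤ K) : harmonicRatio (K + 1) ≤ harmonicRatio K := by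
  rw [harmonicRatio, harmonicRatio, div_le_div_iff₀ (by positivity) (by positivity)]
  nlinarith [mul_nonneg (mul_nonneg (by linarith : (0 : ℝ) ≤ K - 2) (sq_nonneg K))
    (by linarith : (0 : ℝ) ≤ K), sq_nonneg (K - 2), sq_nonneg K]

lemma mul_one_sub_div_mul_one_sub_eq {x y : ℝ} (hy : y ≠ 0) (hy1 : y ≠ 1) :
    x * (1 - x) / (y * (1 - y)) = x / y * (y⁻¹ - x / y) / (y⁻¹ - 1) := by
  have : 1 - y ≠ 0 := sub_ne_zero.mpr (Ne.symm hy1)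
  field_simp

lemma mul_sub_div_sub_one_le {t v s w : ℝ} (ht : 1 ≤ t) (hts : t ≤ s) (hsw : 2 * s ≤ w)
    (hv : 1 < v) (hvw : v ≤ w) : t * (v - t) / (v - 1) ≤ s * (w - s) / (w - 1) := by
  have hw : 1 < w := hv.trans_le hvw
  calc t * (v - t) / (v - 1) ≤ t * (w - t) / (w - 1) := by
        rw [div_le_div_iff₀ (by linarith) (by linarith)]
        nlinarith [mul_nonneg (mul_nonneg (by linarith : (0 : ℝ) ≤ t) (by linarith : 0 ≤ t - 1))
          (by linarith : 0 ≤ w - v)]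
    _ ≤ s * (w - s) / (w - 1) := by
        gcongr ?_ / _
        nlinarith [mul_nonneg (by linarith : 0 ≤ s - t) (by linarith : 0 ≤ w - s - t)]

lemma one_le_mul_one_sub_div_mul_one_sub {x y : ℝ} (hy : 0 < y) (hy1 : y < 1) (hyx : y ≤ x)
    (hx : x ≤ 1 / 2) : 1 ≤ x * (1 - x) / (y * (1 - y)) := by
  rw [one_le_div (by nlinarith)]
  nlinarith [mul_nonneg (by linarith : 0 ≤ x - y) (by linarith : 0 ≤ 1 - x - y)]

lemma rpow_ratio_le_harmonicRatio {a K : ℝ} (ha : 0 < a) (ha1 : a ≤ 1) (hK : 1 ≤ K) :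
    1 / (K + 1) ^ a * (1 - 1 / (K + 1) ^ a) / (1 / (K + 2) ^ a * (1 - 1 / (K + 2) ^ a)) ≤
      harmonicRatio K := by
  have hv : 1 < (K + 2) ^ a := one_lt_rpow (by linarith) ha
  have hquot : 1 / (K + 1) ^ a / (1 / (K + 2) ^ a) = ((K + 2) / (K + 1)) ^ a := by
    rw [div_rpow (by linarith) (by linarith)]
    field_simp
  have hs : 1 ≤ (K + 2) / (K + 1) := by rw [le_div_iff₀ (by linarith)]; linarith
  rw [mul_one_sub_div_mul_one_sub_eq (by positivity) (by simpa using hv.ne'), hquot, one_div, inv_inv]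
  calc _ ≤ (K + 2) / (K + 1) * ((K + 2) - (K + 2) / (K + 1)) / ((K + 2) - 1) :=
        mul_sub_div_sub_one_le (one_le_rpow hs ha.le) (rpow_le_self_of_one_le hs ha1)
          (by rw [mul_div_assoc', div_le_iff₀ (by linarith)]; nlinarith) hv
          (rpow_le_self_of_one_le (by linarith) ha1)
    _ = harmonicRatio K := by
        have : K + 1 ≠ 0 := by linarith
        have : K + 2 - 1 ≠ 0 := by linarith
        rw [harmonicRatio]
        field_simp
        ring

lemma one_div_ratio_eq_harmonicRatio {K : ℝ} (hK : 0 ≤ K) :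
    1 / (K + 1) * (1 - 1 / (K + 1)) / (1 / (K + 2) * (1 - 1 / (K + 2))) = harmonicRatio K := by
  have : K + 1 ≠ 0 := by positivity
  have : K + 2 - 1 ≠ 0 := by ring_nf; positivity
  rw [harmonicRatio]
  field_simp
  ring

lemma two_le_four_rpow {a : ℝ} (ha : 1 / 2 ≤ a) : 2 ≤ (4 : ℝ) ^ a := by
  calc (2 : ℝ) = 4 ^ (1 / 2 : ℝ) := by
        rw [show (4 : ℝ) = 2 ^ (2 : ℝ) by norm_num, ← rpow_mul (by norm_num)]
        norm_num
    _ ≤ 4 ^ a := rpow_le_rpow_of_exponent_le (by norm_num) ha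

theorem gamma_a_bounds (a : ℝ) (ha : 1 / 2 ≤ a) (ha1 : a ≤ 1)
    (α : ℕ → ℝ) (hα : ∀ m, α m = 1 / ((m : ℝ) + 1) ^ a)
    (r : ℕ → ℝ)
    (hr : ∀ k, r k = (α k * (1 - α k)) / (α (k + 1) * (1 - α (k + 1)))) :
    BddAbove {x : ℝ | ∃ k, 2 ≤ k ∧ x = r k} ∧
    1 ≤ sSup {x : ℝ | ∃ k, 2 ≤ k ∧ x = r k} ∧
    (a = 1 → (∀ k, 2 ≤ k → r (k + 1) ≤ r k) ∧
      sSup {x : ℝ | ∃ k, 2 ≤ k ∧ x = r k} = 32 / 27) ∧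
    sSup {x : ℝ | ∃ k, 2 ≤ k ∧ x = r k} ≤ 32 / 27 := by
  have hrα : ∀ k : ℕ, r k = 1 / ((k : ℝ) + 1) ^ a * (1 - 1 / ((k : ℝ) + 1) ^ a) /
      (1 / ((k : ℝ) + 2) ^ a * (1 - 1 / ((k : ℝ) + 2) ^ a)) := fun k => by
    rw [hr, hα, hα]; push_cast; ring_nf
  have hr_le : ∀ k, 2 ≤ k → r k ≤ 32 / 27 := fun k hk => by
    have hK : (2 : ℝ) ≤ k := by exact_mod_cast hk
    exact (hrα k ▸ rpow_ratio_le_harmonicRatio (by linarith) ha1 (by linarith)).trans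
      (harmonicRatio_le_of_neg_one_lt (by linarith))
  have hbdd : BddAbove {x : ℝ | ∃ k, 2 ≤ k ∧ x = r k} :=
    ⟨32 / 27, by rintro _ ⟨k, hk, rfl⟩; exact hr_le k hk⟩
  have hsSup_le : sSup {x : ℝ | ∃ k, 2 ≤ k ∧ x = r k} ≤ 32 / 27 :=
    csSup_le ⟨r 2, 2, le_rfl, rfl⟩ (by rintro _ ⟨k, hk, rfl⟩; exact hr_le k hk)
  have hr3 : 1 ≤ r 3 := by
    have h4 : (2 : ℝ) ≤ ((3 : ℕ) + 1 : ℝ) ^ a := by norm_num; exact two_le_four_rpow ha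
    have h5 : 1 < ((3 : ℕ) + 2 : ℝ) ^ a := one_lt_rpow (by norm_num) (by linarith)
    rw [hrα]
    refine one_le_mul_one_sub_div_mul_one_sub (by positivity) ?_ (by gcongr; norm_num) ?_
    · rw [div_lt_one (by positivity)]; exact h5
    · rw [div_le_div_iff₀ (by positivity) (by norm_num)]; linarith
  refine ⟨hbdd, hr3.trans (le_csSup hbdd ⟨3, by norm_num, rfl⟩), fun ha_one => ?_, hsSup_le⟩
  subst ha_one
  have hr_eq : ∀ k : ℕ, r k = harmonicRatio k := fun k => by
    simpa only [hrα, rpow_one] using one_div_ratio_eq_harmonicRatio (Nat.cast_nonneg k)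
  refine ⟨fun k hk => ?_, hsSup_le.antisymm (le_csSup_of_le hbdd ⟨2, le_rfl, rfl⟩ ?_)⟩
  · rw [hr_eq, hr_eq]; push_cast
    exact harmonicRatio_add_one_le (by exact_mod_cast hk)
  · rw [hr_eq, harmonicRatio]; norm_num
end
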